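/- Let G be a finite group, μ : G → {±1} a surjective group homomorphism, K = ker μ, and g ∈ G \ K. Write Irr(G) and Irr(K) for the sets of isomorphism classes of irreducible finite-dimensional complex representations. Then: (1) the number of classes [τ] ∈ Irr(G) with μ⊗τ ≅ τ equals the number of unordered pairs {[σ], [g·σ]} ⊆ Irr(K) with g·σ ≇ σ; and (2) the number of unordered pairs {[τ], [μ⊗τ]} ⊆ Irr(G) with μ⊗τ ≇ τ equals the number of classes [σ] ∈ Irr(K) with g·σ ≅ σ. In other words, restriction induces a bijection between the orbit space of Irr(G) under the involution τ ↦ μ⊗τ and the orbit space of Irr(K) under conjugation by G, exchanging orbits of length one and orbits of length two. -/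

import Mathlib

noncomputable section

/-- A representation is irreducible if the space is nonzero and the only invariant subspaces
are `⊥` and `⊤`. -/
def IsIrreducibleRep {G V : Type*} [Group G] [AddCommGroup V] [Module ℂ V]
    (ρ : Representation ℂ G V) : Prop :=
  Nontrivial V ∧
    ∀ p : Submodule ℂ V, (∀ g : G, ∀ v ∈ p, ρ g v ∈ p) → p = ⊥ ∨ p = ⊤

/-- Two representations are isomorphic (equivalent) if there is an equivariant linear
isomorphism between their underlying spaces. -/
def RepIso {G V W : Type*} [Group G] [AddCommGroup V] [Module ℂ V]
    [AddCommGroup W] [Module ℂ W]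
    (ρ : Representation ℂ G V) (σ : Representation ℂ G W) : Prop :=
  ∃ e : V ≃ₗ[ℂ] W, ∀ (g : G) (v : V), e (ρ g v) = σ g (e v)

/-- The conjugate representation `g·σ` of a representation `σ` of a normal subgroup `K`,
given by `(g·σ)(k) = σ(g⁻¹ k g)`. -/
def conjRep {G : Type*} [Group G] {K : Subgroup G} [K.Normal] (g : G)
    {V : Type*} [AddCommGroup V] [Module ℂ V] (σ : Representation ℂ K V) :
    Representation ℂ K V :=
  σ.comp (MulAut.conjNormal g⁻¹).toMonoidHom

/-- The twist `μ ⊗ τ` of a representation `τ` by a character `μ : G →* ℂˣ`, given by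
`(μ⊗τ)(x) = μ(x)·τ(x)`. -/
def twistRep {G V : Type*} [Group G] [AddCommGroup V] [Module ℂ V]
    (μ : G →* ℂˣ) (τ : Representation ℂ G V) : Representation ℂ G V where
  toFun g := (μ g : ℂ) • τ g
  map_one' := by simp
  map_mul' g h := by
    ext v
    simp [Module.End.mul_apply, smul_smul, mul_comm]

/-- A bundled finite-dimensional complex representation of `H` (on some `ℂ^d`); every
finite-dimensional complex representation of `H` is isomorphic to one of these. -/
def FinRep (H : Type*) [Group H] : Type _ := Σ d : ℕ, Representation ℂ H (Fin d → ℂ)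

/-- Isomorphism of representations as a setoid on bundled finite-dimensional
representations; its quotient is the set of isomorphism classes. -/
def repSetoid (H : Type*) [Group H] : Setoid (FinRep H) where
  r p q := RepIso p.2 q.2
  iseqv := by
    refine ⟨fun p => ⟨LinearEquiv.refl ℂ _, fun g v => rfl⟩, ?_, ?_⟩
    · rintro p q ⟨e, he⟩
      refine ⟨e.symm, fun g w => e.injective ?_⟩
      rw [e.apply_symm_apply, he, e.apply_symm_apply]
    · rintro p q r ⟨e, he⟩ ⟨f, hf⟩
      exact ⟨e.trans f, fun g v => by
        simp only [LinearEquiv.trans_apply, he, hf]⟩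

/-!
Write `K = ker μ`. An irreducible representation `τ` of `G` either stays irreducible on `K` or
is induced from `K`: for a proper `K`-invariant subspace `P`, the subspaces `P ⊓ gP` and
`P ⊔ gP` are `G`-invariant, so `V = P ⊕ gP` and `τ ≅ Ind P`. Since `Ind σ ≅ μ ⊗ Ind σ` always,
while a `K`-irreducible `τ` cannot satisfy `μ ⊗ τ ≅ τ` (Schur: the isomorphism is a scalar, but
it must anticommute with `τ(g)`), the first case is exactly `μ ⊗ τ ≇ τ` and the second exactly
`μ ⊗ τ ≅ τ`.

In the induced case `Ind σ` is irreducible iff `σ` is irreducible and `g·σ ≇ σ`, and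
`Ind σ ≅ Ind σ'` iff `σ' ≅ σ` or `σ' ≅ g·σ`. In the restricted case `τ|K` is `g`-stable, and a
`g`-stable irreducible `σ` extends to `G`: by Schur an isomorphism `f : g·σ ≅ σ` satisfies
`f² = c σ(g²)`, and `c^{-1/2} f` is a consistent action of `g`. Two extensions of the same `σ`
differ by a scalar on `g` whose square is `1`, i.e. by the twist `μ`. Restriction and induction
therefore induce the two stated bijections.
-/

open Module

section Generic

variable {H V W U : Type*} [Group H] [AddCommGroup V] [Module ℂ V] [AddCommGroup W] [Module ℂ W]
  [AddCommGroup U] [Module ℂ U] {ρ : Representation ℂ H V} {σ : Representation ℂ H W}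

theorem twistRep_apply (μ : H →* ℂˣ) (τ : Representation ℂ H V) (x : H) (v : V) :
    twistRep μ τ x v = (μ x : ℂ) • τ x v :=
  rfl

namespace RepIso

theorem refl (ρ : Representation ℂ H V) : RepIso ρ ρ :=
  ⟨LinearEquiv.refl ℂ V, fun _ _ => rfl⟩

theorem symm (h : RepIso ρ σ) : RepIso σ ρ := by
  obtain ⟨e, he⟩ := h
  exact ⟨e.symm, fun x w => e.injective (by rw [e.apply_symm_apply, he, e.apply_symm_apply])⟩

theorem trans {π : Representation ℂ H U} (h₁ : RepIso ρ σ) (h₂ : RepIso σ π) : RepIso ρ π := by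
  obtain ⟨e, he⟩ := h₁
  obtain ⟨f, hf⟩ := h₂
  exact ⟨e.trans f, fun x v => by simp only [LinearEquiv.trans_apply, he, hf]⟩

theorem twist (μ : H →* ℂˣ) (h : RepIso ρ σ) : RepIso (twistRep μ ρ) (twistRep μ σ) := by
  obtain ⟨e, he⟩ := h
  exact ⟨e, fun x v => by rw [twistRep_apply, twistRep_apply, map_smul, he]⟩

end RepIso

theorem exists_finRep_repIso [FiniteDimensional ℂ V] (ρ : Representation ℂ H V) :
    ∃ p : FinRep H, RepIso p.2 ρ := by
  let e := (finBasis ℂ V).equivFun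
  exact ⟨⟨finrank ℂ V, (e.conjAlgEquiv ℂ : End ℂ V →* End ℂ (Fin (finrank ℂ V) → ℂ)).comp ρ⟩,
    e.symm, fun x w => by simp [LinearEquiv.conjAlgEquiv_apply]⟩

namespace IsIrreducibleRep

theorem of_repIso (hρ : IsIrreducibleRep ρ) (h : RepIso ρ σ) : IsIrreducibleRep σ := by
  obtain ⟨e, he⟩ := h
  have := hρ.1
  refine ⟨e.symm.toEquiv.nontrivial, fun p hp => ?_⟩
  have hmap : (p.comap e.toLinearMap).map e.toLinearMap = p :=
    Submodule.map_comap_eq_of_surjective e.surjective p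
  rcases hρ.2 (p.comap e.toLinearMap) (fun x v hv => by simpa [he] using hp x _ hv) with h | h
  · left; rw [← hmap, h, Submodule.map_bot]
  · right; rw [← hmap, h, Submodule.map_top, LinearMap.range_eq_top]; exact e.surjective

theorem bijective (hρ : IsIrreducibleRep ρ) (hσ : IsIrreducibleRep σ) {f : V →ₗ[ℂ] W}
    (hf : ∀ x v, f (ρ x v) = σ x (f v)) (hf0 : f ≠ 0) : Function.Bijective f := by
  constructor
  · rcases hρ.2 (LinearMap.ker f) (fun x v hv => by simp_all) with h | h
    · exact LinearMap.ker_eq_bot.mp h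
    · exact absurd (LinearMap.ker_eq_top.mp h) hf0
  · rcases hσ.2 (LinearMap.range f) (by rintro x _ ⟨v, rfl⟩; exact ⟨ρ x v, hf x v⟩) with h | h
    · exact absurd (LinearMap.range_eq_bot.mp h) hf0
    · exact LinearMap.range_eq_top.mp h

theorem repIso (hρ : IsIrreducibleRep ρ) (hσ : IsIrreducibleRep σ) {f : V →ₗ[ℂ] W}
    (hf : ∀ x v, f (ρ x v) = σ x (f v)) (hf0 : f ≠ 0) : RepIso ρ σ :=
  ⟨LinearEquiv.ofBijective f (hρ.bijective hσ hf hf0), hf⟩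

theorem exists_eq_smul [FiniteDimensional ℂ V] (hρ : IsIrreducibleRep ρ) (T : V →ₗ[ℂ] V)
    (hT : ∀ x v, T (ρ x v) = ρ x (T v)) : ∃ c : ℂ, ∀ v, T v = c • v := by
  have := hρ.1
  obtain ⟨c, hc⟩ := End.exists_eigenvalue T
  refine ⟨c, fun v => ?_⟩
  rcases hρ.2 (End.eigenspace T c) (fun x v hv => by
      rw [End.mem_eigenspace_iff] at hv ⊢; rw [hT, hv, map_smul]) with h | h
  · exact absurd h hc
  · exact End.mem_eigenspace_iff.mp (h ▸ Submodule.mem_top)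

end IsIrreducibleRep

end Generic

section IndexTwo

variable {G : Type*} [Group G] {μ : G →* ℂˣ}

theorem mul_mem_ker_of_notMem (hval : ∀ x, μ x = 1 ∨ μ x = -1) {x y : G} (hx : x ∉ μ.ker)
    (hy : y ∉ μ.ker) : x * y ∈ μ.ker := by
  have h : ∀ {z}, z ∉ μ.ker → μ z = -1 := fun hz => (hval _).resolve_left hz
  simp [MonoidHom.mem_ker, h hx, h hy]

theorem coe_eq_neg_one_of_notMem (hval : ∀ x, μ x = 1 ∨ μ x = -1) {x : G} (hx : x ∉ μ.ker) :
    (μ x : ℂ) = -1 := by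
  simp [(hval x).resolve_left hx]

theorem coe_eq_one_of_mem {x : G} (hx : x ∈ μ.ker) : (μ x : ℂ) = 1 := by
  simp [MonoidHom.mem_ker.mp hx]

theorem forall_of_mem_ker (hval : ∀ x, μ x = 1 ∨ μ x = -1) {g : G} (hg : g ∉ μ.ker)
    {P : G → Prop} (hK : ∀ k ∈ μ.ker, P k) (hPg : P g) (hmul : ∀ x y, P x → P y → P (x * y))
    (x : G) : P x := by
  by_cases hx : x ∈ μ.ker
  · exact hK x hx
  · have := hmul _ _ hPg (hK (g⁻¹ * x) (mul_mem_ker_of_notMem hval (by simpa using hg) hx))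
    rwa [mul_inv_cancel_left] at this

variable (hval : ∀ x, μ x = 1 ∨ μ x = -1) {g : G} (hg : g ∉ μ.ker)
variable {V W : Type*} [AddCommGroup V] [Module ℂ V] [AddCommGroup W] [Module ℂ W]

include hval hg in
theorem intertwines_of_mem_ker {τ₁ : Representation ℂ G V} {τ₂ : Representation ℂ G W}
    (f : V →ₗ[ℂ] W) (hK : ∀ k : μ.ker, ∀ v, f (τ₁ k v) = τ₂ k (f v))
    (hfg : ∀ v, f (τ₁ g v) = τ₂ g (f v)) (x : G) (v : V) : f (τ₁ x v) = τ₂ x (f v) := by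
  revert v
  refine forall_of_mem_ker hval hg (P := fun x => ∀ v, f (τ₁ x v) = τ₂ x (f v))
    (fun k hk => hK ⟨k, hk⟩) hfg (fun x y hx hy v => ?_) x
  simp only [map_mul, Module.End.mul_apply, hx, hy]

include hval hg in
theorem repIso_of_mem_ker {τ₁ : Representation ℂ G V} {τ₂ : Representation ℂ G W}
    (e : V ≃ₗ[ℂ] W) (hK : ∀ k : μ.ker, ∀ v, e (τ₁ k v) = τ₂ k (e v))
    (heg : ∀ v, e (τ₁ g v) = τ₂ g (e v)) : RepIso τ₁ τ₂ :=
  ⟨e, intertwines_of_mem_ker hval hg e.toLinearMap hK heg⟩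

include hval hg in
theorem invariant_of_mem_ker {τ : Representation ℂ G V} {P : Submodule ℂ V}
    (hK : ∀ k : μ.ker, ∀ v ∈ P, τ k v ∈ P) (hPg : ∀ v ∈ P, τ g v ∈ P) (x : G) :
    ∀ v ∈ P, τ x v ∈ P := by
  refine forall_of_mem_ker hval hg (P := fun x => ∀ v ∈ P, τ x v ∈ P) (fun k hk => hK ⟨k, hk⟩)
    hPg (fun x y hx hy v hv => ?_) x
  simpa only [map_mul, Module.End.mul_apply] using hx _ (hy v hv)

end IndexTwo

section Conjugation

variable {G : Type*} [Group G] {μ : G →* ℂˣ}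
variable {V W : Type*} [AddCommGroup V] [Module ℂ V] [AddCommGroup W] [Module ℂ W]

theorem conjRep_apply (g : G) (σ : Representation ℂ μ.ker V) (k : μ.ker) :
    conjRep g σ k = σ (MulAut.conjNormal g⁻¹ k) :=
  rfl

theorem RepIso.conj (g : G) {σ : Representation ℂ μ.ker V} {σ' : Representation ℂ μ.ker W}
    (h : RepIso σ σ') : RepIso (conjRep g σ) (conjRep g σ') := by
  obtain ⟨e, he⟩ := h
  exact ⟨e, fun k v => he _ v⟩

theorem RepIso.comp {H K : Type*} [Group H] [Group K] {τ : Representation ℂ H V}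
    {τ' : Representation ℂ H W} (h : RepIso τ τ') (f : K →* H) :
    RepIso (τ.comp f) (τ'.comp f) := by
  obtain ⟨e, he⟩ := h
  exact ⟨e, fun k v => he (f k) v⟩

theorem IsIrreducibleRep.conj {σ : Representation ℂ μ.ker V} (hσ : IsIrreducibleRep σ)
    (g : G) : IsIrreducibleRep (conjRep g σ) := by
  refine ⟨hσ.1, fun p hp => hσ.2 p fun k v hv => ?_⟩
  convert hp (MulAut.conjNormal g k) v hv using 2
  rw [conjRep_apply, ← MulAut.mul_apply, ← map_mul, inv_mul_cancel, map_one, MulAut.one_apply]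

theorem conjRep_conjRep_repIso (hval : ∀ x, μ x = 1 ∨ μ x = -1) {g : G} (hg : g ∉ μ.ker)
    (σ : Representation ℂ μ.ker V) : RepIso (conjRep g (conjRep g σ)) σ := by
  let s : μ.ker := ⟨g * g, mul_mem_ker_of_notMem hval hg hg⟩
  refine ⟨LinearEquiv.ofBijective (σ s) (σ.apply_bijective s), fun k v => ?_⟩
  simp only [LinearEquiv.ofBijective_apply, conjRep_apply, ← Module.End.mul_apply, ← map_mul]
  exact congrArg (σ · v) (Subtype.ext (by simp [s]; group))

theorem conjRep_comp_subtype_repIso (τ : Representation ℂ G V) (g : G) :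
    RepIso (conjRep g (τ.comp μ.ker.subtype)) (τ.comp μ.ker.subtype) := by
  refine ⟨LinearEquiv.ofBijective (τ g) (τ.apply_bijective g), fun k v => ?_⟩
  simp [conjRep_apply, ← Module.End.mul_apply, ← map_mul, mul_assoc]

theorem twistRep_comp_subtype (τ : Representation ℂ G V) :
    (twistRep μ τ).comp μ.ker.subtype = τ.comp μ.ker.subtype := by
  ext k v
  simp [twistRep_apply, coe_eq_one_of_mem k.2]

theorem twistRep_twistRep (hval : ∀ x, μ x = 1 ∨ μ x = -1) (τ : Representation ℂ G V) :
    twistRep μ (twistRep μ τ) = τ := by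
  ext x v
  rcases hval x with h | h <;> simp [twistRep_apply, h]

end Conjugation

section Extension

variable {G : Type*} [Group G] {μ : G →* ℂˣ} (hval : ∀ x, μ x = 1 ∨ μ x = -1) {g : G}
  (hg : g ∉ μ.ker) {V : Type*} [AddCommGroup V] [Module ℂ V]

def extendRep (σ : Representation ℂ μ.ker V) (T : Module.End ℂ V)
    (hT : ∀ k v, T (conjRep g σ k v) = σ k (T v))
    (hT2 : ∀ v, T (T v) = σ ⟨g * g, mul_mem_ker_of_notMem hval hg hg⟩ v) :
    Representation ℂ G V where
  toFun x := if hx : x ∈ μ.ker then σ ⟨x, hx⟩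
    else T * σ ⟨g⁻¹ * x, mul_mem_ker_of_notMem hval (inv_mem_iff.not.mpr hg) hx⟩
  map_one' := by
    simp only [dif_pos (one_mem μ.ker)]
    exact map_one σ
  map_mul' x y := by
    have hg' : g⁻¹ ∉ μ.ker := inv_mem_iff.not.mpr hg
    by_cases hx : x ∈ μ.ker <;> by_cases hy : y ∈ μ.ker
    · simp only [dif_pos (mul_mem hx hy), dif_pos hx, dif_pos hy, ← map_mul]
      rfl
    · simp only [dif_neg ((Subgroup.mul_mem_cancel_left _ hx).not.mpr hy), dif_pos hx, dif_neg hy]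
      rw [show (⟨g⁻¹ * (x * y), _⟩ : μ.ker) = MulAut.conjNormal g⁻¹ ⟨x, hx⟩ *
        ⟨g⁻¹ * y, mul_mem_ker_of_notMem hval hg' hy⟩ from Subtype.ext (by simp [mul_assoc])]
      ext v
      simp only [map_mul, Module.End.mul_apply, ← hT, conjRep_apply]
    · simp only [dif_neg ((Subgroup.mul_mem_cancel_right _ hy).not.mpr hx), dif_neg hx, dif_pos hy]
      rw [show (⟨g⁻¹ * (x * y), _⟩ : μ.ker) =
        ⟨g⁻¹ * x, mul_mem_ker_of_notMem hval hg' hx⟩ * ⟨y, hy⟩ from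
        Subtype.ext (mul_assoc _ _ _).symm]
      simp only [map_mul, mul_assoc]
    · simp only [dif_pos (mul_mem_ker_of_notMem hval hx hy), dif_neg hx, dif_neg hy]
      rw [show (⟨x * y, _⟩ : μ.ker) = ⟨g * g, mul_mem_ker_of_notMem hval hg hg⟩ *
        MulAut.conjNormal g⁻¹ ⟨g⁻¹ * x, mul_mem_ker_of_notMem hval hg' hx⟩ *
        ⟨g⁻¹ * y, mul_mem_ker_of_notMem hval hg' hy⟩ from Subtype.ext (by simp; group)]
      ext v
      simp only [map_mul, Module.End.mul_apply, ← hT, hT2, conjRep_apply]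

variable {hval hg}
variable {σ : Representation ℂ μ.ker V} {T : Module.End ℂ V}
  {hT : ∀ k v, T (conjRep g σ k v) = σ k (T v)}
  {hT2 : ∀ v, T (T v) = σ ⟨g * g, mul_mem_ker_of_notMem hval hg hg⟩ v}

theorem extendRep_apply_of_mem (k : μ.ker) : extendRep hval hg σ T hT hT2 k = σ k :=
  dif_pos k.2

theorem extendRep_apply_self : extendRep hval hg σ T hT hT2 g = T := by
  refine (dif_neg hg).trans ?_
  rw [show (⟨g⁻¹ * g, _⟩ : μ.ker) = 1 from Subtype.ext (inv_mul_cancel g), map_one, mul_one]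

theorem extendRep_comp_subtype : (extendRep hval hg σ T hT hT2).comp μ.ker.subtype = σ :=
  MonoidHom.ext fun k => dif_pos k.2

end Extension

section Induction

variable {G : Type*} [Group G] {μ : G →* ℂˣ} (hval : ∀ x, μ x = 1 ∨ μ x = -1) {g : G}
  (hg : g ∉ μ.ker) {V : Type*} [AddCommGroup V] [Module ℂ V]

/-- `Ind q` on `V × V`, the factors standing for the cosets `ker μ` and `g ker μ`. -/
def indRep (q : Representation ℂ μ.ker V) : Representation ℂ G (V × V) :=
  extendRep hval hg (q.prod (conjRep g q))
    ((q ⟨g * g, mul_mem_ker_of_notMem hval hg hg⟩ ∘ₗ LinearMap.snd ℂ V V).prod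
      (LinearMap.fst ℂ V V))
    (fun k u => by
      ext
      · show q _ (conjRep g (conjRep g q) k u.2) = q k (q _ u.2)
        simp only [conjRep_apply, ← Module.End.mul_apply, ← map_mul]
        exact congrArg (q · u.2) (Subtype.ext (by simp; group))
      · rfl)
    (fun u => by
      ext
      · rfl
      · show q _ u.2 = conjRep g q _ u.2
        exact congrArg (q · u.2) (Subtype.ext (by simp)))

variable {hval hg}

theorem indRep_apply_of_mem (q : Representation ℂ μ.ker V) (k : μ.ker) (u : V × V) :
    indRep hval hg q k u = (q k u.1, conjRep g q k u.2) := by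
  simp [indRep, extendRep_apply_of_mem]

theorem indRep_apply_self (q : Representation ℂ μ.ker V) (u : V × V) :
    indRep hval hg q g u = (q ⟨g * g, mul_mem_ker_of_notMem hval hg hg⟩ u.2, u.1) := by
  simp [indRep, extendRep_apply_self]

end Induction

section InducedProperties

variable {G : Type*} [Group G] {μ : G →* ℂˣ} (hval : ∀ x, μ x = 1 ∨ μ x = -1) {g : G}
  (hg : g ∉ μ.ker) {V W : Type*} [AddCommGroup V] [Module ℂ V] [AddCommGroup W] [Module ℂ W]
  {q : Representation ℂ μ.ker V}

theorem twistRep_indRep_repIso (q : Representation ℂ μ.ker V) :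
    RepIso (twistRep μ (indRep hval hg q)) (indRep hval hg q) := by
  refine repIso_of_mem_ker hval hg ((LinearEquiv.refl ℂ V).prodCongr (LinearEquiv.neg ℂ))
    (fun k u => ?_) (fun u => ?_)
  · simp [twistRep_apply, coe_eq_one_of_mem k.2, indRep_apply_of_mem]
  · simp [twistRep_apply, coe_eq_neg_one_of_notMem hval hg, indRep_apply_self]

theorem RepIso.ind {q' : Representation ℂ μ.ker W} (h : RepIso q q') :
    RepIso (indRep hval hg q) (indRep hval hg q') := by
  obtain ⟨e, he⟩ := h
  refine repIso_of_mem_ker hval hg (e.prodCongr e) (fun k u => ?_) (fun u => ?_)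
  · simp [indRep_apply_of_mem, conjRep_apply, he]
  · simp [indRep_apply_self, he]

/-- The isomorphism is the action of `g`, which exchanges the two cosets. -/
theorem indRep_conjRep_repIso (q : Representation ℂ μ.ker V) :
    RepIso (indRep hval hg (conjRep g q)) (indRep hval hg q) := by
  refine repIso_of_mem_ker hval hg
    (LinearEquiv.ofBijective _ ((indRep hval hg q).apply_bijective g)) (fun k u => ?_) (fun u => ?_)
  · simp only [LinearEquiv.ofBijective_apply, indRep_apply_of_mem, indRep_apply_self, conjRep_apply,
      ← Module.End.mul_apply, ← map_mul]
    exact Prod.ext (congrArg (q · u.2) (Subtype.ext (by simp; group))) rfl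
  · simp only [LinearEquiv.ofBijective_apply, indRep_apply_self, conjRep_apply]
    exact Prod.ext rfl (congrArg (q · u.2) (Subtype.ext (by simp)))

end InducedProperties

section InducedIrreducible

variable {G : Type*} [Group G] {μ : G →* ℂˣ} {hval : ∀ x, μ x = 1 ∨ μ x = -1} {g : G}
  {hg : g ∉ μ.ker} {V W : Type*} [AddCommGroup V] [Module ℂ V] [AddCommGroup W] [Module ℂ W]
  {q : Representation ℂ μ.ker V}

theorem IsIrreducibleRep.of_ind (h : IsIrreducibleRep (indRep hval hg q)) :
    IsIrreducibleRep q := by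
  have := h.1
  refine ⟨?_, fun p hp => ?_⟩
  · by_contra hV
    rw [not_nontrivial_iff_subsingleton] at hV
    exact false_of_nontrivial_of_subsingleton (V × V)
  · have hprod : ∀ x, ∀ u ∈ p.prod p, indRep hval hg q x u ∈ p.prod p := by
      refine invariant_of_mem_ker hval hg (fun k u hu => ?_) (fun u hu => ?_)
      · rw [indRep_apply_of_mem]
        exact ⟨hp k _ hu.1, hp _ _ hu.2⟩
      · rw [indRep_apply_self]
        exact ⟨hp _ _ hu.2, hu.1⟩
    simpa [Submodule.prod_eq_bot_iff, Submodule.prod_eq_top_iff] using h.2 _ hprod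

theorem RepIso.of_ind {q' : Representation ℂ μ.ker W}
    (h' : IsIrreducibleRep (indRep hval hg q'))
    (h : RepIso (indRep hval hg q) (indRep hval hg q')) :
    RepIso q q' ∨ RepIso q (conjRep g q') := by
  have hq := (h'.of_repIso h.symm).of_ind
  have hq' := h'.of_ind
  have := hq.1
  obtain ⟨E, hE⟩ := h
  have hcomp : ∀ (k : μ.ker) v, E (q k v, 0) = (q' k (E (v, 0)).1, conjRep g q' k (E (v, 0)).2) :=
    fun k v => by simpa [indRep_apply_of_mem] using hE k (v, 0)
  by_cases h1 : LinearMap.fst ℂ W W ∘ₗ E.toLinearMap ∘ₗ LinearMap.inl ℂ V V = 0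
  · refine .inr (hq.repIso (hq'.conj g) (f := LinearMap.snd ℂ W W ∘ₗ E.toLinearMap ∘ₗ
      LinearMap.inl ℂ V V) (fun k v => congrArg Prod.snd (hcomp k v)) fun h2 => ?_)
    obtain ⟨v, hv⟩ := exists_ne (0 : V)
    have : E (v, 0) = E 0 :=
      (Prod.ext (LinearMap.congr_fun h1 v) (LinearMap.congr_fun h2 v)).trans E.map_zero.symm
    exact hv (congrArg Prod.fst (E.injective this))
  · exact .inl (hq.repIso hq' (fun k v => congrArg Prod.fst (hcomp k v)) h1)

/-- A nonzero such `P` would be the graph of an isomorphism `q ≅ g·q`. -/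
theorem eq_bot_of_comap_inl_eq_bot (hq : IsIrreducibleRep q) (hn : ¬ RepIso (conjRep g q) q)
    {P : Submodule ℂ (V × V)} (hP : ∀ x, ∀ u ∈ P, indRep hval hg q x u ∈ P)
    (hA : P.comap (LinearMap.inl ℂ V V) = ⊥) : P = ⊥ := by
  have := hq.1
  have hA' : ∀ v, (v, (0 : V)) ∈ P → v = 0 := fun v hv => by
    simpa [hA] using (show v ∈ P.comap (LinearMap.inl ℂ V V) from hv)
  have hB : ∀ v, ((0 : V), v) ∈ P → v = 0 := fun v hv => hA' v <| by
    have hswap : indRep hval hg q g (v, 0) = (0, v) := by simp [indRep_apply_self]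
    simpa [← hswap] using hP g⁻¹ _ hv
  let ρP := Representation.subrepresentation ((indRep hval hg q).comp μ.ker.subtype) P
    fun k _ hu => hP k _ hu
  let π₁ := LinearMap.fst ℂ V V ∘ₗ P.subtype
  let π₂ := LinearMap.snd ℂ V V ∘ₗ P.subtype
  have hπ₁ : ∀ k u, π₁ (ρP k u) = q k (π₁ u) := fun k u => by
    show (indRep hval hg q k u).1 = _
    rw [indRep_apply_of_mem]; rfl
  have hπ₂ : ∀ k u, π₂ (ρP k u) = conjRep g q k (π₂ u) := fun k u => by
    show (indRep hval hg q k u).2 = _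
    rw [indRep_apply_of_mem]; rfl
  have hinj : Function.Injective π₁ := by
    refine (injective_iff_map_eq_zero _).mpr fun u hu => Subtype.ext (Prod.ext hu ?_)
    have hu' : (u : V × V) = (0, (u : V × V).2) := Prod.ext hu rfl
    exact hB _ (hu' ▸ u.2)
  rcases hq.2 (LinearMap.range π₁) (by rintro k _ ⟨u, rfl⟩; exact ⟨ρP k u, hπ₁ k u⟩) with hM | hM
  · refine eq_bot_iff.mpr fun u hu => ?_
    have : π₁ ⟨u, hu⟩ = 0 := by simpa [hM] using LinearMap.mem_range_self π₁ ⟨u, hu⟩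
    simpa using congrArg Subtype.val (hinj (this.trans (map_zero π₁).symm))
  · have e₁ : RepIso ρP q :=
      ⟨LinearEquiv.ofBijective π₁ ⟨hinj, LinearMap.range_eq_top.mp hM⟩, hπ₁⟩
    refine absurd (((hq.of_repIso e₁.symm).repIso (hq.conj g) hπ₂ fun h0 => ?_).symm.trans e₁) hn
    obtain ⟨v, hv⟩ := exists_ne (0 : V)
    obtain ⟨u, hu⟩ := LinearMap.range_eq_top.mp hM v
    have hu' : (u : V × V) = (v, 0) := Prod.ext hu (LinearMap.congr_fun h0 u)
    exact hv (hA' v (hu' ▸ u.2))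

theorem IsIrreducibleRep.ind (hq : IsIrreducibleRep q) (hn : ¬ RepIso (conjRep g q) q) :
    IsIrreducibleRep (indRep hval hg q) := by
  have := hq.1
  refine ⟨inferInstance, fun P hP => ?_⟩
  rcases hq.2 (P.comap (LinearMap.inl ℂ V V))
    (fun k v hv => by simpa [indRep_apply_of_mem] using hP k _ hv) with hA | hA
  · exact .inl (eq_bot_of_comap_inl_eq_bot hq hn hP hA)
  · refine .inr (Submodule.eq_top_iff'.mpr fun u => ?_)
    have h1 : ∀ v, (v, (0 : V)) ∈ P := fun v => by
      simpa using (hA ▸ Submodule.mem_top : v ∈ P.comap (LinearMap.inl ℂ V V))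
    simpa [indRep_apply_self] using P.add_mem (h1 u.1) (hP g _ (h1 u.2))

/-- `T (u₁, u₂) = (f u₂, q(g⁻²) f u₁)` commutes with `Ind q` but is not a scalar. -/
theorem not_conjRep_repIso_of_ind [FiniteDimensional ℂ V]
    (h : IsIrreducibleRep (indRep hval hg q)) :
    ¬ RepIso (conjRep g q) q := by
  rintro ⟨f, hf⟩
  have := h.of_ind.1
  let s : μ.ker := ⟨g * g, mul_mem_ker_of_notMem hval hg hg⟩
  have hf' : ∀ k v, f (q k v) = q (MulAut.conjNormal g k) (f v) := fun k v => by
    simpa [conjRep_apply] using hf (MulAut.conjNormal g k) v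
  let T : V × V →ₗ[ℂ] V × V := (f.toLinearMap ∘ₗ LinearMap.snd ℂ V V).prod
    (q s⁻¹ ∘ₗ f.toLinearMap ∘ₗ LinearMap.fst ℂ V V)
  have hT : ∀ x u, T (indRep hval hg q x u) = indRep hval hg q x (T u) := by
    refine intertwines_of_mem_ker hval hg T (fun k u => ?_) fun u => ?_
    · rw [indRep_apply_of_mem, indRep_apply_of_mem]
      ext
      · exact hf k u.2
      · show q s⁻¹ (f (q k u.1)) = conjRep g q k (q s⁻¹ (f u.1))
        simp only [hf', conjRep_apply, ← Module.End.mul_apply, ← map_mul]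
        exact congrArg (q · (f u.1)) (Subtype.ext (by simp [s]; group))
    · rw [indRep_apply_self, indRep_apply_self]
      ext
      · exact (q.self_inv_apply s (f u.1)).symm
      · show q s⁻¹ (f (q s u.2)) = f u.2
        rw [hf', show MulAut.conjNormal g s = s from Subtype.ext (by simp [s]; group),
          q.inv_self_apply]
  obtain ⟨c, hc⟩ := h.exists_eq_smul T hT
  obtain ⟨v, hv⟩ := exists_ne (0 : V)
  have : f v = 0 := by simpa [T] using congrArg Prod.fst (hc (0, v))
  exact hv (f.injective (this.trans f.map_zero.symm))

end InducedIrreducible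

section Restriction

variable {G : Type*} [Group G] {μ : G →* ℂˣ} (hval : ∀ x, μ x = 1 ∨ μ x = -1) {g : G}
  (hg : g ∉ μ.ker) {V : Type*} [AddCommGroup V] [Module ℂ V]
  {τ : Representation ℂ G V}

theorem IsIrreducibleRep.of_comp {K : Type*} [Group K] {f : K →* G}
    (h : IsIrreducibleRep (τ.comp f)) : IsIrreducibleRep τ :=
  ⟨h.1, fun p hp => h.2 p fun k => hp (f k)⟩

include hval hg in
theorem not_twistRep_repIso_of_comp_subtype [FiniteDimensional ℂ V]
    (h : IsIrreducibleRep (τ.comp μ.ker.subtype)) : ¬ RepIso (twistRep μ τ) τ := by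
  rintro ⟨e, he⟩
  have := h.1
  obtain ⟨c, hc⟩ := h.exists_eq_smul e.toLinearMap fun k v => by
    simpa [twistRep_apply, coe_eq_one_of_mem k.2] using he k v
  simp only [LinearEquiv.coe_coe] at hc
  obtain ⟨v, hv⟩ := exists_ne (0 : V)
  have h1 : -(c • τ g v) = c • τ g v := by
    simpa [twistRep_apply, coe_eq_neg_one_of_notMem hval hg, hc] using he g v
  have h2 : (2 : ℂ) • (c • τ g v) = 0 := by
    rw [two_smul]
    nth_rewrite 1 [← h1]
    exact neg_add_cancel _
  rcases (by simpa using h2 : c = 0 ∨ τ g v = 0) with h3 | h3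
  · exact hv (e.injective (by simp [hc, h3]))
  · exact hv ((τ.apply_bijective g).injective (h3.trans (map_zero _).symm))

include hval hg in
/-- For a `ker μ`-invariant `P`, both `P ⊓ gP` and `P ⊔ gP` are `G`-invariant. -/
theorem isCompl_map_of_invariant (hτ : IsIrreducibleRep τ) {P : Submodule ℂ V}
    (hP : ∀ k : μ.ker, ∀ v ∈ P, τ k v ∈ P) (hbot : P ≠ ⊥) (htop : P ≠ ⊤) :
    IsCompl P (P.map (τ g)) := by
  have hPg : ∀ k : μ.ker, ∀ v ∈ P.map (τ g), τ k v ∈ P.map (τ g) := by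
    rintro k _ ⟨w, hw, rfl⟩
    refine ⟨_, hP (MulAut.conjNormal g⁻¹ k) w hw, ?_⟩
    simp [← Module.End.mul_apply, ← map_mul, mul_assoc]
  have hgg : ∀ w ∈ P, τ g (τ g w) ∈ P := fun w hw => by
    simpa [← Module.End.mul_apply, ← map_mul] using
      hP ⟨g * g, mul_mem_ker_of_notMem hval hg hg⟩ w hw
  constructor
  · rw [disjoint_iff]
    refine (hτ.2 _ (invariant_of_mem_ker hval hg
      (fun k v hv => Submodule.mem_inf.mpr ⟨hP k v hv.1, hPg k v hv.2⟩) ?_)).resolve_right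
      fun h => htop (top_le_iff.mp (h ▸ inf_le_left))
    rintro v ⟨hv, w, hw, rfl⟩
    exact ⟨hgg w hw, τ g w, hv, rfl⟩
  · rw [codisjoint_iff]
    refine (hτ.2 _ (invariant_of_mem_ker hval hg ?_ ?_)).resolve_left
      fun h => hbot (le_bot_iff.mp (h ▸ le_sup_left))
    · intro k v hv
      obtain ⟨a, ha, _, ⟨b, hb, rfl⟩, rfl⟩ := Submodule.mem_sup.mp hv
      rw [map_add]
      exact add_mem (Submodule.mem_sup_left (hP k a ha))
        (Submodule.mem_sup_right (hPg k _ ⟨b, hb, rfl⟩))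
    · intro v hv
      obtain ⟨a, ha, _, ⟨b, hb, rfl⟩, rfl⟩ := Submodule.mem_sup.mp hv
      rw [map_add]
      exact add_mem (Submodule.mem_sup_right ⟨a, ha, rfl⟩) (Submodule.mem_sup_left (hgg b hb))

theorem indRep_subrepresentation_repIso {P : Submodule ℂ V}
    (hP : ∀ k : μ.ker, ∀ v ∈ P, τ k v ∈ P) (hc : IsCompl P (P.map (τ g))) :
    RepIso (indRep hval hg (Representation.subrepresentation (τ.comp μ.ker.subtype) P
      fun k v hv => hP k v hv)) τ := by
  let e := ((LinearEquiv.refl ℂ P).prodCongr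
    (Submodule.equivMapOfInjective (τ g) (τ.apply_bijective g).injective P)).trans
    (Submodule.prodEquivOfIsCompl _ _ hc)
  have he : ∀ u, e u = u.1 + τ g u.2 := fun u => Submodule.coe_prodEquivOfIsCompl' _ _ hc _
  refine repIso_of_mem_ker hval hg e (fun k u => ?_) fun u => ?_
  · rw [he, he, indRep_apply_of_mem, map_add]
    congr 1
    show τ g (τ (MulAut.conjNormal g⁻¹ k) u.2) = τ k (τ g u.2)
    simp [← Module.End.mul_apply, ← map_mul, mul_assoc]
  · rw [he, he, indRep_apply_self, map_add]
    show τ (g * g) u.2 + τ g u.1 = _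
    rw [map_mul, Module.End.mul_apply, add_comm]

end Restriction

section Clifford

variable {G : Type*} [Group G] {μ : G →* ℂˣ} (hval : ∀ x, μ x = 1 ∨ μ x = -1) {g : G}
  (hg : g ∉ μ.ker) {V : Type*} [AddCommGroup V] [Module ℂ V] [FiniteDimensional ℂ V] {τ : Representation ℂ G V}

theorem IsIrreducibleRep.comp_subtype_or_exists_ind (hτ : IsIrreducibleRep τ) :
    IsIrreducibleRep (τ.comp μ.ker.subtype) ∨
      ∃ p : FinRep μ.ker, RepIso (indRep hval hg p.2) τ := by
  refine or_iff_not_imp_left.mpr fun hres => ?_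
  have := hτ.1
  obtain ⟨P, hP, hbot, htop⟩ : ∃ P : Submodule ℂ V, (∀ k : μ.ker, ∀ v ∈ P, τ k v ∈ P) ∧
      P ≠ ⊥ ∧ P ≠ ⊤ := by
    simpa [IsIrreducibleRep, this, not_or] using hres
  obtain ⟨p, hp⟩ := exists_finRep_repIso
    (Representation.subrepresentation (τ.comp μ.ker.subtype) P fun k v hv => hP k v hv)
  exact ⟨p, (hp.ind hval hg).trans
    (indRep_subrepresentation_repIso hval hg hP (isCompl_map_of_invariant hval hg hτ hP hbot htop))⟩

include hval hg in
theorem IsIrreducibleRep.comp_subtype (hτ : IsIrreducibleRep τ)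
    (hn : ¬ RepIso (twistRep μ τ) τ) : IsIrreducibleRep (τ.comp μ.ker.subtype) :=
  (hτ.comp_subtype_or_exists_ind hval hg).resolve_right fun ⟨_, hp⟩ =>
    hn (((hp.symm.twist μ).trans (twistRep_indRep_repIso hval hg _)).trans hp)

theorem IsIrreducibleRep.exists_ind_of_twistRep (hτ : IsIrreducibleRep τ)
    (h : RepIso (twistRep μ τ) τ) : ∃ p : FinRep μ.ker, IsIrreducibleRep p.2 ∧
      ¬ RepIso (conjRep g p.2) p.2 ∧ RepIso (indRep hval hg p.2) τ := by
  rcases hτ.comp_subtype_or_exists_ind hval hg with hres | ⟨p, hp⟩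
  · exact absurd h (not_twistRep_repIso_of_comp_subtype hval hg hres)
  · have hind := hτ.of_repIso hp.symm
    exact ⟨p, hind.of_ind, not_conjRep_repIso_of_ind hind, hp⟩

end Clifford

section RestrictionInjective

variable {G : Type*} [Group G] {μ : G →* ℂˣ} {g : G} {V W : Type*} [AddCommGroup V] [Module ℂ V]
  [AddCommGroup W] [Module ℂ W] [FiniteDimensional ℂ W] {τ₁ : Representation ℂ G V}
  {τ₂ : Representation ℂ G W}

/-- By Schur's lemma `τ₂(g)⁻¹ E τ₁(g) = c E`, and `c² = 1` because `g² ∈ ker μ`. -/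
theorem RepIso.of_comp_subtype (hval : ∀ x, μ x = 1 ∨ μ x = -1) (hg : g ∉ μ.ker)
    (h₂ : IsIrreducibleRep (τ₂.comp μ.ker.subtype))
    (h : RepIso (τ₁.comp μ.ker.subtype) (τ₂.comp μ.ker.subtype)) :
    RepIso τ₁ τ₂ ∨ RepIso (twistRep μ τ₁) τ₂ := by
  obtain ⟨E, hE⟩ := h
  replace hE : ∀ (k : μ.ker) v, E (τ₁ k v) = τ₂ k (E v) := hE
  have hE' : ∀ (k : μ.ker) w, E.symm (τ₂ k w) = τ₁ k (E.symm w) := fun k w => by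
    rw [LinearEquiv.symm_apply_eq, hE, E.apply_symm_apply]
  let D : W →ₗ[ℂ] W := τ₂ g⁻¹ ∘ₗ E.toLinearMap ∘ₗ τ₁ g ∘ₗ E.symm.toLinearMap
  obtain ⟨c, hc⟩ := h₂.exists_eq_smul D fun k w => by
    show τ₂ g⁻¹ (E (τ₁ g (E.symm (τ₂ k w)))) = τ₂ k (τ₂ g⁻¹ (E (τ₁ g (E.symm w))))
    rw [hE', ← Module.End.mul_apply, ← map_mul,
      show g * k = (MulAut.conjNormal g k : G) * g by simp, map_mul, Module.End.mul_apply]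
    rw [hE]
    simp [← Module.End.mul_apply, ← map_mul, mul_assoc]
  have hEg : ∀ v, E (τ₁ g v) = c • τ₂ g (E v) := fun v => by
    rw [← map_smul, ← hc (E v)]
    simp [D]
  have := h₂.1
  have : Nontrivial V := E.toEquiv.nontrivial
  obtain ⟨v, hv⟩ := exists_ne (0 : V)
  have hc2 : c * c = 1 := by
    have h1 : E (τ₁ (g * g) v) = τ₂ (g * g) (E v) := hE ⟨g * g, mul_mem_ker_of_notMem hval hg hg⟩ v
    rw [map_mul, Module.End.mul_apply, hEg, hEg, map_smul, smul_smul, ← Module.End.mul_apply,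
      ← map_mul] at h1
    by_contra hne
    have : ((c * c) - 1) • τ₂ (g * g) (E v) = 0 := by rw [sub_smul, h1, one_smul, sub_self]
    rcases smul_eq_zero.mp this with h | h
    · exact hne (sub_eq_zero.mp h)
    · exact hv (E.injective ((τ₂.apply_bijective _).injective (h.trans (by simp))))
  rcases mul_self_eq_one_iff.mp hc2 with rfl | rfl
  · exact .inl (repIso_of_mem_ker hval hg E hE fun v => by simpa using hEg v)
  · refine .inr (repIso_of_mem_ker hval hg E (fun k v => ?_) fun v => ?_)
    · simpa [twistRep_apply, coe_eq_one_of_mem k.2] using hE k v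
    · simp [twistRep_apply, coe_eq_neg_one_of_notMem hval hg, hEg]

end RestrictionInjective

section ExtensionExists

variable {G : Type*} [Group G] {μ : G →* ℂˣ} {g : G} {V : Type*} [AddCommGroup V] [Module ℂ V]
  [FiniteDimensional ℂ V] {σ : Representation ℂ μ.ker V}

/-- By Schur's lemma `f² = c σ(g²)` for an isomorphism `f : g·σ ≅ σ`, and `c^{-1/2} f` is an
admissible action of `g`. -/
theorem IsIrreducibleRep.exists_extension (hval : ∀ x, μ x = 1 ∨ μ x = -1) (hg : g ∉ μ.ker)
    (hσ : IsIrreducibleRep σ) (h : RepIso (conjRep g σ) σ) :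
    ∃ τ : Representation ℂ G V, IsIrreducibleRep τ ∧ ¬ RepIso (twistRep μ τ) τ ∧
      τ.comp μ.ker.subtype = σ := by
  obtain ⟨f, hf⟩ := h
  have := hσ.1
  let s : μ.ker := ⟨g * g, mul_mem_ker_of_notMem hval hg hg⟩
  have hf' : ∀ k v, f (σ k v) = σ (MulAut.conjNormal g k) (f v) := fun k v => by
    simpa [conjRep_apply] using hf (MulAut.conjNormal g k) v
  obtain ⟨c, hc⟩ := hσ.exists_eq_smul (f.toLinearMap ∘ₗ f.toLinearMap ∘ₗ σ s⁻¹) fun k v => by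
    show f (f (σ s⁻¹ (σ k v))) = σ k (f (f (σ s⁻¹ v)))
    rw [← Module.End.mul_apply, ← map_mul, show s⁻¹ * k =
      MulAut.conjNormal g⁻¹ (MulAut.conjNormal g⁻¹ k) * s⁻¹ from Subtype.ext (by simp [s]; group),
      map_mul, Module.End.mul_apply, hf', hf']
    simp
  have hff : ∀ v, f (f v) = c • σ s v := fun v => by simpa using hc (σ s v)
  obtain ⟨r, hr⟩ := IsAlgClosed.exists_pow_nat_eq c two_pos
  have hr0 : r ≠ 0 := by
    rintro rfl
    obtain ⟨v, hv⟩ := exists_ne (0 : V)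
    refine hv (f.injective (f.injective ?_))
    simp [hff, ← hr]
  let T : Module.End ℂ V := r⁻¹ • f.toLinearMap
  have hT : ∀ k v, T (conjRep g σ k v) = σ k (T v) := by simp [T, hf]
  have hT2 : ∀ v, T (T v) = σ s v := fun v => by
    simp only [T, LinearMap.smul_apply, LinearEquiv.coe_coe, map_smul, hff, smul_smul, ← hr]
    rw [show r⁻¹ * (r⁻¹ * r ^ 2) = 1 by field_simp, one_smul]
  have hres : (extendRep hval hg σ T hT hT2).comp μ.ker.subtype = σ := extendRep_comp_subtype
  have hτ : IsIrreducibleRep ((extendRep hval hg σ T hT hT2).comp μ.ker.subtype) := by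
    rw [hres]; exact hσ
  exact ⟨_, hτ.of_comp, not_twistRep_repIso_of_comp_subtype hval hg hτ, hres⟩

end ExtensionExists

section Counting

theorem Nat.card_eq_of_relation {α β : Type*} (R : α → β → Prop) (hα : ∀ a, ∃ b, R a b)
    (hβ : ∀ b, ∃ a, R a b) (hR : ∀ a a' b b', R a b → R a' b' → (a = a' ↔ b = b')) :
    Nat.card α = Nat.card β := by
  choose f hf using hα
  refine Nat.card_eq_of_bijective f ⟨fun a a' h => (hR _ _ _ _ (hf a) (hf a')).2 h, fun b => ?_⟩
  obtain ⟨a, ha⟩ := hβ b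
  exact ⟨a, (hR _ _ _ _ (hf a) ha).1 rfl⟩

theorem Quotient.pair_mk_eq_pair_mk_iff {α : Type*} {s : Setoid α} {f : α → α}
    (hf : ∀ a b, a ≈ b → f a ≈ f b) (hff : ∀ a, f (f a) ≈ a) {a b : α} :
    ({⟦a⟧, ⟦f a⟧} : Set (Quotient s)) = {⟦b⟧, ⟦f b⟧} ↔ a ≈ b ∨ a ≈ f b := by
  simp only [Set.pair_eq_pair_iff, Quotient.eq]
  constructor
  · rintro (⟨h, -⟩ | ⟨h, -⟩)
    exacts [.inl h, .inr h]
  · rintro (h | h)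
    exacts [.inl ⟨h, hf _ _ h⟩, .inr ⟨h, Setoid.trans (hf _ _ h) (hff b)⟩]

end Counting

section Main

variable {G : Type*} [Group G] {μ : G →* ℂˣ} (hval : ∀ x, μ x = 1 ∨ μ x = -1) {g : G}
  (hg : g ∉ μ.ker)

include hval hg in
theorem pair_conjRep_eq_pair_iff (p p' : FinRep μ.ker) :
    ({Quotient.mk (repSetoid μ.ker) p, Quotient.mk (repSetoid μ.ker) ⟨p.1, conjRep g p.2⟩} :
      Set (Quotient (repSetoid μ.ker))) =
      {Quotient.mk (repSetoid μ.ker) p', Quotient.mk (repSetoid μ.ker) ⟨p'.1, conjRep g p'.2⟩} ↔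
    RepIso p.2 p'.2 ∨ RepIso p.2 (conjRep g p'.2) :=
  Quotient.pair_mk_eq_pair_mk_iff (s := repSetoid μ.ker)
    (f := fun p : FinRep μ.ker => (⟨p.1, conjRep g p.2⟩ : FinRep μ.ker))
    (fun _ _ h => RepIso.conj g h) fun p => conjRep_conjRep_repIso hval hg p.2

include hval in
theorem pair_twistRep_eq_pair_iff (p p' : FinRep G) :
    ({Quotient.mk (repSetoid G) p, Quotient.mk (repSetoid G) ⟨p.1, twistRep μ p.2⟩} :
      Set (Quotient (repSetoid G))) =
      {Quotient.mk (repSetoid G) p', Quotient.mk (repSetoid G) ⟨p'.1, twistRep μ p'.2⟩} ↔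
    RepIso p.2 p'.2 ∨ RepIso p.2 (twistRep μ p'.2) :=
  Quotient.pair_mk_eq_pair_mk_iff (s := repSetoid G)
    (f := fun p : FinRep G => (⟨p.1, twistRep μ p.2⟩ : FinRep G))
    (fun _ _ h => RepIso.twist μ h) fun p => by
      show RepIso (twistRep μ (twistRep μ p.2)) p.2
      rw [twistRep_twistRep hval]
      exact RepIso.refl _

include hval hg in
theorem card_twistRep_repIso_eq_card_conjRep_pairs :
    Nat.card {c : Quotient (repSetoid G) //
        ∃ p : FinRep G, Quotient.mk (repSetoid G) p = c ∧
          IsIrreducibleRep p.2 ∧ RepIso (twistRep μ p.2) p.2} =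
      Nat.card {s : Set (Quotient (repSetoid μ.ker)) //
        ∃ p : FinRep μ.ker, IsIrreducibleRep p.2 ∧ ¬ RepIso (conjRep g p.2) p.2 ∧
          s = {Quotient.mk (repSetoid μ.ker) p,
               Quotient.mk (repSetoid μ.ker) ⟨p.1, conjRep g p.2⟩}} := by
  refine (Nat.card_eq_of_relation (fun s c => ∃ (p : FinRep μ.ker) (q : FinRep G),
      IsIrreducibleRep p.2 ∧ ¬ RepIso (conjRep g p.2) p.2 ∧
      s.1 = {Quotient.mk _ p, Quotient.mk _ ⟨p.1, conjRep g p.2⟩} ∧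
      c.1 = Quotient.mk _ q ∧ RepIso (indRep hval hg p.2) q.2) ?_ ?_ ?_).symm
  · rintro ⟨_, p, hp, hpn, rfl⟩
    obtain ⟨q, hq⟩ := exists_finRep_repIso (indRep hval hg p.2)
    exact ⟨⟨_, q, rfl, (hp.ind hpn).of_repIso hq.symm,
      ((hq.twist μ).trans (twistRep_indRep_repIso hval hg _)).trans hq.symm⟩,
      p, q, hp, hpn, rfl, rfl, hq.symm⟩
  · rintro ⟨_, q, rfl, hq, hqt⟩
    obtain ⟨p, hp, hpn, hpq⟩ := hq.exists_ind_of_twistRep hval hg hqt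
    exact ⟨⟨_, p, hp, hpn, rfl⟩, p, q, hp, hpn, rfl, rfl, hpq⟩
  · rintro s s' c c' ⟨p, q, -, -, hs, hc, hpq⟩ ⟨p', q', hp', hpn', hs', hc', hpq'⟩
    rw [Subtype.ext_iff, Subtype.ext_iff, hs, hs', hc, hc', Quotient.eq,
      pair_conjRep_eq_pair_iff hval hg]
    constructor
    · rintro (h | h)
      · exact (hpq.symm.trans (h.ind hval hg)).trans hpq'
      · exact ((hpq.symm.trans (h.ind hval hg)).trans (indRep_conjRep_repIso hval hg _)).trans hpq'
    · exact fun h => ((hpq.trans h).trans hpq'.symm).of_ind (hp'.ind hpn')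

include hval hg in
theorem card_twistRep_pairs_eq_card_conjRep_repIso :
    Nat.card {s : Set (Quotient (repSetoid G)) //
        ∃ p : FinRep G, IsIrreducibleRep p.2 ∧ ¬ RepIso (twistRep μ p.2) p.2 ∧
          s = {Quotient.mk (repSetoid G) p,
               Quotient.mk (repSetoid G) ⟨p.1, twistRep μ p.2⟩}} =
      Nat.card {c : Quotient (repSetoid μ.ker) //
        ∃ p : FinRep μ.ker, Quotient.mk (repSetoid μ.ker) p = c ∧
          IsIrreducibleRep p.2 ∧ RepIso (conjRep g p.2) p.2} := by
  refine Nat.card_eq_of_relation (fun s c => ∃ p : FinRep G,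
      IsIrreducibleRep p.2 ∧ ¬ RepIso (twistRep μ p.2) p.2 ∧
      s.1 = {Quotient.mk _ p, Quotient.mk _ ⟨p.1, twistRep μ p.2⟩} ∧
      c.1 = Quotient.mk _ (⟨p.1, p.2.comp μ.ker.subtype⟩ : FinRep μ.ker)) ?_ ?_ ?_
  · rintro ⟨_, p, hp, hpn, rfl⟩
    exact ⟨⟨_, ⟨p.1, p.2.comp μ.ker.subtype⟩, rfl, hp.comp_subtype hval hg hpn,
      conjRep_comp_subtype_repIso p.2 g⟩, p, hp, hpn, rfl, rfl⟩
  · rintro ⟨_, q, rfl, hq, hqc⟩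
    obtain ⟨τ, hτ, hτn, hres⟩ := hq.exists_extension hval hg hqc
    refine ⟨⟨_, ⟨q.1, τ⟩, hτ, hτn, rfl⟩, ⟨q.1, τ⟩, hτ, hτn, rfl, Quotient.sound ?_⟩
    show RepIso q.2 (τ.comp μ.ker.subtype)
    rw [hres]
    exact .refl _
  · rintro s s' c c' ⟨p, -, -, hs, hc⟩ ⟨p', hp', hpn', hs', hc'⟩
    rw [Subtype.ext_iff, Subtype.ext_iff, hs, hs', hc, hc', pair_twistRep_eq_pair_iff hval]
    constructor
    · rintro (h | h)
      · exact Quotient.sound (h.comp _)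
      · exact Quotient.sound ((h.comp _).trans (twistRep_comp_subtype p'.2 ▸ RepIso.refl _))
    · refine fun h => (RepIso.of_comp_subtype hval hg (hp'.comp_subtype hval hg hpn')
        (Quotient.exact h)).imp id fun h' => ?_
      simpa [twistRep_twistRep hval] using h'.twist μ

end Main

theorem stmt_5_general {G : Type*} [Group G]
    (μ : G →* ℂˣ) (hval : ∀ x, μ x = 1 ∨ μ x = -1)
    (g : G) (hg : g ∉ μ.ker) :
    (Nat.card {c : Quotient (repSetoid G) //
        ∃ p : FinRep G, Quotient.mk (repSetoid G) p = c ∧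
          IsIrreducibleRep p.2 ∧ RepIso (twistRep μ p.2) p.2} =
      Nat.card {s : Set (Quotient (repSetoid μ.ker)) //
        ∃ p : FinRep μ.ker, IsIrreducibleRep p.2 ∧ ¬ RepIso (conjRep g p.2) p.2 ∧
          s = {Quotient.mk (repSetoid μ.ker) p,
               Quotient.mk (repSetoid μ.ker) ⟨p.1, conjRep g p.2⟩}}) ∧
    (Nat.card {s : Set (Quotient (repSetoid G)) //
        ∃ p : FinRep G, IsIrreducibleRep p.2 ∧ ¬ RepIso (twistRep μ p.2) p.2 ∧
          s = {Quotient.mk (repSetoid G) p,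
               Quotient.mk (repSetoid G) ⟨p.1, twistRep μ p.2⟩}} =
      Nat.card {c : Quotient (repSetoid μ.ker) //
        ∃ p : FinRep μ.ker, Quotient.mk (repSetoid μ.ker) p = c ∧
          IsIrreducibleRep p.2 ∧ RepIso (conjRep g p.2) p.2}) :=
  ⟨card_twistRep_repIso_eq_card_conjRep_pairs hval hg,
    card_twistRep_pairs_eq_card_conjRep_repIso hval hg⟩

/-- Let `G` be a finite group, `μ : G → {±1}` surjective with kernel `K`, and `g ∈ G \ K`.
Then (1) the number of isomorphism classes `[τ]` of irreducible representations of `G` with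
`μ⊗τ ≅ τ` equals the number of unordered pairs `{[σ], [g·σ]}` of classes of irreducible
representations of `K` with `g·σ ≇ σ`; and (2) the number of unordered pairs `{[τ], [μ⊗τ]}`
with `μ⊗τ ≇ τ` equals the number of classes `[σ]` with `g·σ ≅ σ`. -/
theorem stmt_5 {G : Type*} [Group G] [Finite G]
    (μ : G →* ℂˣ) (hval : ∀ x, μ x = 1 ∨ μ x = -1) (hsurj : ∃ x, μ x = -1)
    (g : G) (hg : g ∉ μ.ker) :
    (Nat.card {c : Quotient (repSetoid G) //
        ∃ p : FinRep G, Quotient.mk (repSetoid G) p = c ∧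
          IsIrreducibleRep p.2 ∧ RepIso (twistRep μ p.2) p.2} =
      Nat.card {s : Set (Quotient (repSetoid μ.ker)) //
        ∃ p : FinRep μ.ker, IsIrreducibleRep p.2 ∧ ¬ RepIso (conjRep g p.2) p.2 ∧
          s = {Quotient.mk (repSetoid μ.ker) p,
               Quotient.mk (repSetoid μ.ker) ⟨p.1, conjRep g p.2⟩}}) ∧
    (Nat.card {s : Set (Quotient (repSetoid G)) //
        ∃ p : FinRep G, IsIrreducibleRep p.2 ∧ ¬ RepIso (twistRep μ p.2) p.2 ∧
          s = {Quotient.mk (repSetoid G) p,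
               Quotient.mk (repSetoid G) ⟨p.1, twistRep μ p.2⟩}} =
      Nat.card {c : Quotient (repSetoid μ.ker) //
        ∃ p : FinRep μ.ker, Quotient.mk (repSetoid μ.ker) p = c ∧
          IsIrreducibleRep p.2 ∧ RepIso (conjRep g p.2) p.2}) :=
  stmt_5_general μ hval g hg
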